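/- arXiv:2407.05936 — 3 statements merged into one kernel-verified Lean document; each statement's English description precedes it below -/
import Mathlib

section
/- Let b and n be positive integers with b ≤ n, and let F be the fan on ⌈n/b⌉ vertices. Then the b-blowup of F contains every n-vertex graph G for which there exists a set X ⊆ V(G) with |X| ≤ b such that bw(G−X) ≤ b. -/
open SimpleGraph

/-- Base-2 logarithm with the convention `log x = 1` for `x ≤ 2`. -/
noncomputable def log2' (x : ℝ) : ℝ := if x ≤ 2 then 1 else Real.logb 2 x

/-- `G` is contained in `G'`: `G` is isomorphic to a subgraph of `G'`. -/
def IsContainedIn {α β : Type} (G : SimpleGraph α) (G' : SimpleGraph β) : Prop :=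
  ∃ f : α → β, Function.Injective f ∧ ∀ u v : α, G.Adj u v → G'.Adj (f u) (f v)

/-- The `b`-blowup of a graph `H`: each vertex is replaced by a copy of `K_b`, and each edge
by a complete bipartite graph between the corresponding copies. -/
def blowup {α : Type} (H : SimpleGraph α) (b : ℕ) : SimpleGraph (α × Fin b) where
  Adj x y := (x.1 = y.1 ∧ x.2 ≠ y.2) ∨ H.Adj x.1 y.1
  symm := by
    constructor
    rintro x y (⟨h1, h2⟩ | h)
    · exact Or.inl ⟨h1.symm, fun hh => h2 hh.symm⟩
    · exact Or.inr h.symm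
  loopless := by
    constructor
    rintro x (⟨_, h2⟩ | h)
    · exact h2 rfl
    · exact H.loopless.irrefl _ h

/-- The fan on `p + 1` vertices: vertex `0` is the center, adjacent to every vertex of the
path `1, 2, …, p`. -/
def fan (p : ℕ) : SimpleGraph (Fin (p + 1)) :=
  SimpleGraph.fromRel (fun i j => i = 0 ∨ (i : ℕ) + 1 = (j : ℕ))

/-- The bandwidth of `G` is at most `b`: some ordering `v_1, …, v_n` of the vertices
satisfies `|i - j| ≤ b` for every edge `v_i v_j`. -/
def BandwidthLE {α : Type} [Fintype α] (G : SimpleGraph α) (b : ℝ) : Prop :=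
  ∃ e : α ≃ Fin (Fintype.card α),
    ∀ u v : α, G.Adj u v → |((e u : ℕ) : ℝ) - ((e v : ℕ) : ℝ)| ≤ b

/-- The graph `G - X` obtained from `G` by deleting the vertices in `X`. -/
def deleteVerts {α : Type} (G : SimpleGraph α) (X : Finset α) :
    SimpleGraph {v : α // v ∉ X} :=
  SimpleGraph.comap Subtype.val G

/-!
List the vertices of `G` as `X` first and then `G - X` in an ordering of bandwidth at most `b`,
and send the vertex in position `p` to vertex `(p / b, p % b)` of the blowup of the fan. Since
`|X| ≤ b`, all of `X` lands in the blowup of the centre, which is joined to everything; an edge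
of `G - X` joins positions at distance at most `b`, hence lands in one bag or in two consecutive
bags of the path.
-/

theorem IsContainedIn.trans {α β γ : Type} {G : SimpleGraph α} {H : SimpleGraph β}
    {K : SimpleGraph γ} (hGH : IsContainedIn G H) (hHK : IsContainedIn H K) :
    IsContainedIn G K := by
  obtain ⟨f, hf, hfadj⟩ := hGH
  obtain ⟨g, hg, hgadj⟩ := hHK
  exact ⟨g ∘ f, hg.comp hf, fun u v huv => hgadj _ _ (hfadj u v huv)⟩

def centeredBand (N b : ℕ) : SimpleGraph (Fin N) :=
  fromRel fun x y => x < y ∧ ((x : ℕ) < b ∨ (y : ℕ) ≤ x + b)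

theorem centeredBand_adj {N b : ℕ} {x y : Fin N} :
    (centeredBand N b).Adj x y ↔
      x ≠ y ∧ ((x : ℕ) < b ∨ (y : ℕ) < b ∨ ((x : ℕ) ≤ y + b ∧ (y : ℕ) ≤ x + b)) := by
  rw [centeredBand, fromRel_adj, and_congr_right_iff]
  intro hne
  have := Fin.val_ne_iff.mpr hne
  simp only [Fin.lt_def]
  omega

theorem centeredBand_isContainedIn_blowup_fan (P b : ℕ) :
    IsContainedIn (centeredBand ((P + 1) * b) b) (blowup (fan P) b) := by
  refine ⟨finProdFinEquiv.symm, finProdFinEquiv.symm.injective, ?_⟩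
  suffices key : ∀ x y : Fin ((P + 1) * b), x < y → ((x : ℕ) < b ∨ (y : ℕ) ≤ x + b) →
      (blowup (fan P) b).Adj (finProdFinEquiv.symm x) (finProdFinEquiv.symm y) by
    intro x y hxy
    rw [centeredBand, fromRel_adj] at hxy
    obtain ⟨-, ⟨hlt, hclose⟩ | ⟨hlt, hclose⟩⟩ := hxy
    · exact key x y hlt hclose
    · exact (key y x hlt hclose).symm
  intro x y hlt hclose
  have hb : 0 < b := x.modNat.pos
  have hdiv := Nat.div_le_div_right (c := b) hlt.le
  have hx := Nat.div_add_mod x b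
  have hy := Nat.div_add_mod y b
  simp only [blowup, fan, fromRel_adj, finProdFinEquiv_symm_apply, ne_eq, Fin.ext_iff,
    Fin.coe_divNat, Fin.coe_modNat, Fin.val_zero]
  by_cases hbag : (x : ℕ) / b = y / b
  · left
    refine ⟨hbag, fun hmod => ?_⟩
    rw [hbag, hmod, hy] at hx
    exact hlt.ne (Fin.ext hx.symm)
  · right
    refine ⟨hbag, Or.inl ?_⟩
    rcases hclose with hcentre | hnear
    · exact Or.inl (Nat.div_eq_of_lt hcentre)
    · have := (Nat.div_le_div_right (c := b) hnear).trans_eq (Nat.add_div_right _ hb)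
      omega

theorem isContainedIn_centeredBand {V : Type} [Fintype V] [DecidableEq V] {G : SimpleGraph V}
    {X : Finset V} {b N : ℕ} (hX : X.card ≤ b) (hbw : BandwidthLE (deleteVerts G X) b)
    (hN : Fintype.card V ≤ N) : IsContainedIn G (centeredBand N b) := by
  obtain ⟨order, horder⟩ := hbw
  let pos : V ≃ Fin (X.card + Fintype.card {v // v ∉ X}) :=
    (Equiv.sumCompl (· ∈ X)).symm.trans ((X.equivFin.sumCongr order).trans finSumFinEquiv)
  have pos_of_mem : ∀ u (hu : u ∈ X), (pos u : ℕ) < b := by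
    intro u hu
    simp only [pos, Equiv.trans_apply, Equiv.sumCompl_symm_apply_of_pos hu,
      Equiv.sumCongr_apply, Sum.map_inl, finSumFinEquiv_apply_left, Fin.val_castAdd]
    exact (Fin.is_lt _).trans_le hX
  have pos_of_notMem : ∀ u (hu : u ∉ X), (pos u : ℕ) = X.card + order ⟨u, hu⟩ := by
    intro u hu
    simp only [pos, Equiv.trans_apply, Equiv.sumCompl_symm_apply_of_neg hu,
      Equiv.sumCongr_apply, Sum.map_inr, finSumFinEquiv_apply_right, Fin.val_natAdd]
  have hcard : X.card + Fintype.card {v // v ∉ X} ≤ N := by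
    simpa using (Fintype.card_congr pos).symm.trans_le hN
  refine ⟨Fin.castLE hcard ∘ pos, (Fin.castLE_injective hcard).comp pos.injective, ?_⟩
  intro u v huv
  simp only [centeredBand_adj, Function.comp_apply, ne_eq, Fin.ext_iff, Fin.val_castLE]
  refine ⟨Fin.val_ne_iff.mpr (pos.injective.ne huv.ne), ?_⟩
  by_cases hu : u ∈ X
  · exact Or.inl (pos_of_mem u hu)
  by_cases hv : v ∈ X
  · exact Or.inr (Or.inl (pos_of_mem v hv))
  have hband := abs_sub_le_iff.mp (horder ⟨u, hu⟩ ⟨v, hv⟩ huv)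
  have hleft : (order ⟨u, hu⟩ : ℕ) ≤ order ⟨v, hv⟩ + b := by
    exact_mod_cast sub_le_iff_le_add'.mp hband.1
  have hright : (order ⟨v, hv⟩ : ℕ) ≤ order ⟨u, hu⟩ + b := by
    exact_mod_cast sub_le_iff_le_add'.mp hband.2
  rw [pos_of_notMem u hu, pos_of_notMem v hv]
  omega

theorem blowup_of_fan_universal_general
    (b n : ℕ) (hb : 0 < b)
    (V : Type) [Fintype V] [DecidableEq V] (G : SimpleGraph V)
    (hcard : Fintype.card V = n)
    (h : ∃ X : Finset V, X.card ≤ b ∧ BandwidthLE (deleteVerts G X) b) :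
    IsContainedIn G (blowup (fan ((n + b - 1) / b - 1)) b) := by
  obtain ⟨X, hX, hbw⟩ := h
  have hslots : n ≤ ((n + b - 1) / b - 1 + 1) * b := by
    have hceil : n ≤ b * ((n + b - 1) / b) := le_smul_ceilDiv (b := n) hb
    calc n ≤ (n + b - 1) / b * b := hceil.trans_eq (mul_comm _ _)
      _ ≤ ((n + b - 1) / b - 1 + 1) * b := Nat.mul_le_mul_right b (by omega)
  exact (isContainedIn_centeredBand hX hbw (hcard.trans_le hslots)).trans
    (centeredBand_isContainedIn_blowup_fan _ b)

/-- **Lemma.** Let `b ≤ n` be positive integers and let `F` be the fan on `⌈n/b⌉` vertices.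
Then the `b`-blowup of `F` contains every `n`-vertex graph `G` having a set `X ⊆ V(G)` with
`|X| ≤ b` such that `bw(G − X) ≤ b`.  (Here `fan ((n + b - 1) / b - 1)` is the fan on
`⌈n/b⌉` vertices.) -/
theorem blowup_of_fan_universal
    (b n : ℕ) (hb : 0 < b) (hn : 0 < n) (hbn : b ≤ n)
    (V : Type) [Fintype V] [DecidableEq V] (G : SimpleGraph V)
    (hcard : Fintype.card V = n)
    (h : ∃ X : Finset V, X.card ≤ b ∧ BandwidthLE (deleteVerts G X) b) :
    IsContainedIn G (blowup (fan ((n + b - 1) / b - 1)) b) :=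
  blowup_of_fan_universal_general b n hb V G hcard h
end

section
/- Let H be a graph, let (B_x)_{x∈V(T)} be a tree-decomposition of H, and let ξ: V(H) → ℝ be a function that is non-negative on V(H); for a subgraph X of H write ξ(X) := Σ_{v∈V(X)} ξ(v). Then for every positive integer c there exists a set S ⊆ V(T) with |S| ≤ c−1 such that every connected component X of H − (⋃_{x∈S} B_x) satisfies ξ(X) ≤ ξ(H)/c. -/
/-!
Root the tree at `r`, put `w = ξ(H)/c`, and call a node `x` heavy if the vertices all of whose
bags lie in the subtree at `x` weigh more than `w`. Delete the bag of a deepest heavy node `x`.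
A connected piece avoiding `B x` that meets the subtree at `x` has all its bags in the subtree of
a single child of `x`, which is light. Since every vertex lies in some bag, the vertices whose
bags avoid the subtree at `x` weigh less than `ξ(H) - w`; an induction that separates weight at
most `(k + 1) w` with `k` bags deals with them.
-/

open SimpleGraph

/-- Tree decompositions: the bags cover every edge, and for each vertex the tree nodes whose
bag contains it induce a non-empty connected subtree. -/
structure IsTreeDecomp {α τ : Type} (H : SimpleGraph α) (T : SimpleGraph τ)
    (B : τ → Set α) : Prop where
  isTree : T.IsTree
  edge_cover : ∀ u v : α, H.Adj u v → ∃ x : τ, u ∈ B x ∧ v ∈ B x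
  bags_connected : ∀ v : α, (T.induce {x : τ | v ∈ B x}).Connected

/-- `H` has a tree decomposition all of whose bags have at most `m` vertices. -/
def HasTreeDecompBagsLE {α : Type} (H : SimpleGraph α) (m : ℕ) : Prop :=
  ∃ (τ : Type) (T : SimpleGraph τ) (B : τ → Set α),
    IsTreeDecomp H T B ∧ ∀ x : τ, (B x).Finite ∧ (B x).ncard ≤ m

/-- `H` has treewidth at most `t`. -/
def TreewidthLE {α : Type} (H : SimpleGraph α) (t : ℕ) : Prop :=
  HasTreeDecompBagsLE H (t + 1)

namespace SimpleGraph

variable {V : Type*} {G : SimpleGraph V}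

theorem Preconnected.forall_of_forall_adj (hG : G.Preconnected) {P : V → Prop}
    (hP : ∀ ⦃a b⦄, G.Adj a b → P a → P b) {a : V} (ha : P a) (b : V) : P b := by
  obtain ⟨p⟩ := hG a b
  induction p with
  | nil => exact ha
  | cons h _ ih => exact ih (hP h ha)

theorem ConnectedComponent.preconnected_induce_image_val {s : Set V}
    (C : (G.induce s).ConnectedComponent) : (G.induce (Subtype.val '' C.supp)).Preconnected := by
  let f : C.toSimpleGraph →g G.induce (Subtype.val '' C.supp) :=
    ⟨fun u => ⟨u.1.1, u.1, u.2, rfl⟩, fun h => h⟩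
  refine C.connected_toSimpleGraph.preconnected.map f ?_
  rintro ⟨_, u, hu, rfl⟩
  exact ⟨⟨u, hu⟩, rfl⟩

/-- The nodes separated from `r` by `x`: in a tree rooted at `r`, the subtree at `x`. -/
def descendants (G : SimpleGraph V) (r x : V) : Set V :=
  {y | ∀ p : G.Walk r y, x ∈ p.support}

@[simp]
theorem descendants_root (r : V) : G.descendants r r = Set.univ :=
  Set.eq_univ_of_forall fun _ p => p.start_mem_support

theorem Preconnected.exists_adj_mem_descendants (hG : G.Preconnected) {r x a : V}
    (ha : a ∈ G.descendants r x) (hax : a ≠ x) :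
    ∃ z, G.Adj x z ∧ z ∈ G.descendants r x ∧ ∃ p : G.Walk z a, x ∉ p.support := by
  obtain ⟨p, hp⟩ := hG.exists_isPath x a
  cases p with
  | nil => exact absurd rfl hax
  | cons hxz q =>
    have hxq := ((Walk.cons_isPath_iff hxz q).1 hp).2
    refine ⟨_, hxz, fun s => ?_, q, hxq⟩
    have := ha (s.append q)
    rw [Walk.support_append, List.mem_append] at this
    exact this.resolve_right fun h => hxq (List.mem_of_mem_tail h)

theorem Connected.dist_lt_of_mem_descendants (hG : G.Connected) {r x z : V}
    (hz : z ∈ G.descendants r x) (hzx : z ≠ x) : G.dist r x < G.dist r z := by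
  classical
  obtain ⟨p, hp⟩ := hG.exists_walk_length_eq_dist r z
  have hx := hz p
  have hsplit := congrArg Walk.length (p.take_spec hx)
  have hdrop : (p.dropUntil x hx).length ≠ 0 := fun h => hzx (Walk.eq_of_length_eq_zero h).symm
  have htake := dist_le (p.takeUntil x hx)
  rw [Walk.length_append] at hsplit
  omega

/-- Acyclicity enters only here: the edge `xz` is a bridge. -/
theorem IsAcyclic.mem_descendants_of_walk (hG : G.IsAcyclic) {r x z y : V} (hxz : G.Adj x z)
    (hz : z ∈ G.descendants r x) (p : G.Walk z y) (hp : x ∉ p.support) :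
    y ∈ G.descendants r z := by
  classical
  intro q
  have hx : x ∈ q.support := by
    by_contra hx
    have := hz (q.append p.reverse)
    rw [Walk.support_append, Walk.support_reverse, List.mem_append] at this
    exact this.elim hx fun h => hp (List.mem_reverse.1 (List.mem_of_mem_tail h))
  have hbridge := isBridge_iff_forall_walk_mem_edges.1 (isAcyclic_iff_forall_adj_isBridge.1 hG hxz)
    ((q.dropUntil x hx).append p.reverse)
  rw [Walk.edges_append, Walk.edges_reverse, List.mem_append, List.mem_reverse] at hbridge
  rcases hbridge with h | h
  · exact q.support_dropUntil_subset_support hx (Walk.snd_mem_support_of_mem_edges _ h)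
  · exact absurd (Walk.fst_mem_support_of_mem_edges p h) hp

end SimpleGraph

theorem finsum_mem_mono_of_nonneg {ι : Type*} {f : ι → ℝ} (hf : ∀ i, 0 ≤ f i) {s t : Set ι}
    (ht : t.Finite) (hst : s ⊆ t) : ∑ᶠ i ∈ s, f i ≤ ∑ᶠ i ∈ t, f i := by
  rw [← Set.union_sdiff_cancel hst,
    finsum_mem_union Set.disjoint_sdiff_right (ht.subset hst) ht.sdiff]
  exact le_add_of_nonneg_right (finsum_nonneg fun i => finsum_nonneg fun _ => hf i)

section TreeDecomp

variable {α τ : Type} {H : SimpleGraph α} {T : SimpleGraph τ} {B : τ → Set α}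

def outsideBags (B : τ → Set α) (K : Set τ) : Set α := (⋃ x ∈ K, B x)ᶜ

theorem mem_outsideBags {K : Set τ} {v : α} : v ∈ outsideBags B K ↔ ∀ x ∈ K, v ∉ B x := by
  simp [outsideBags]

@[simp]
theorem outsideBags_empty : outsideBags B ∅ = Set.univ := by
  simp [outsideBags]

theorem outsideBags_union (K L : Set τ) :
    outsideBags B (K ∪ L) = outsideBags B K ∩ outsideBags B L := by
  rw [outsideBags, outsideBags, outsideBags, Set.biUnion_union, Set.compl_union]

namespace IsTreeDecomp

theorem exists_mem_bag (hTD : IsTreeDecomp H T B) (v : α) : ∃ x, v ∈ B x :=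
  let ⟨⟨x, hx⟩⟩ := (hTD.bags_connected v).nonempty
  ⟨x, hx⟩

/-- All bags meeting `C` lie in one component of `T - x`, phrased via node sets closed under
the edges of `T - x`. -/
theorem forall_mem_of_closed (hTD : IsTreeDecomp H T B) {C : Set α}
    (hC : (H.induce C).Preconnected) {x : τ} (hxC : ∀ v ∈ C, v ∉ B x) {A : Set τ}
    (hA : ∀ ⦃a b⦄, T.Adj a b → a ≠ x → b ≠ x → a ∈ A → b ∈ A) {v₀ : α} {a₀ : τ}
    (hv₀ : v₀ ∈ C) (hv₀a₀ : v₀ ∈ B a₀) (ha₀ : a₀ ∈ A) : ∀ v ∈ C, ∀ a, v ∈ B a → a ∈ A := by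
  have bag : ∀ v ∈ C, ∀ a b, v ∈ B a → v ∈ B b → a ∈ A → b ∈ A := fun v hv a b ha hb haA =>
    (hTD.bags_connected v).preconnected.forall_of_forall_adj (P := fun y => y.1 ∈ A)
      (fun y y' h hy => hA h (fun e => hxC v hv (e ▸ y.2)) (fun e => hxC v hv (e ▸ y'.2)) hy)
      (a := ⟨a, ha⟩) haA ⟨b, hb⟩
  intro v hv
  refine hC.forall_of_forall_adj (P := fun u => ∀ a, u.1 ∈ B a → a ∈ A) (fun u u' huu' hu => ?_)
    (a := ⟨v₀, hv₀⟩) (fun a ha => bag v₀ hv₀ a₀ a hv₀a₀ ha ha₀) ⟨v, hv⟩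
  obtain ⟨y, hy, hy'⟩ := hTD.edge_cover _ _ huu'
  exact fun a ha => bag u' u'.2 y a hy' ha (hu y hy)

theorem exists_subset_outsideBags_compl_descendants (hTD : IsTreeDecomp H T B) {C : Set α}
    (hC : (H.induce C).Preconnected) {r x : τ} (hxC : ∀ v ∈ C, v ∉ B x) {v₀ : α} {a₀ : τ}
    (hv₀ : v₀ ∈ C) (hv₀a₀ : v₀ ∈ B a₀) (ha₀ : a₀ ∈ T.descendants r x) :
    ∃ z ∈ T.descendants r x, z ≠ x ∧ C ⊆ outsideBags B (T.descendants r z)ᶜ := by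
  have ha₀x : a₀ ≠ x := fun h => hxC v₀ hv₀ (h ▸ hv₀a₀)
  obtain ⟨z, hxz, hz, p, hp⟩ :=
    hTD.isTree.connected.preconnected.exists_adj_mem_descendants ha₀ ha₀x
  refine ⟨z, hz, hxz.ne', fun v hv => mem_outsideBags.2 fun y hy hvy => hy ?_⟩
  obtain ⟨q, hq⟩ := hTD.forall_mem_of_closed hC hxC (A := {y | ∃ q : T.Walk z y, x ∉ q.support})
    (fun a b hab _ hbx ⟨q, hq⟩ => ⟨q.concat hab, by simp [Walk.support_concat, hq, Ne.symm hbx]⟩)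
    hv₀ hv₀a₀ ⟨p, hp⟩ v hv y hvy
  exact hTD.isTree.isAcyclic.mem_descendants_of_walk hxz hz q hq

theorem finite_setOf_nonempty_outsideBags_compl [Finite α] (hTD : IsTreeDecomp H T B) (r : τ) :
    {y | (outsideBags B (T.descendants r y)ᶜ).Nonempty}.Finite := by
  choose t ht using hTD.exists_mem_bag
  let W : ∀ v, T.Walk r (t v) := fun v => (hTD.isTree.connected r (t v)).some
  refine (Set.finite_iUnion fun v => (W v).support.finite_toSet).subset ?_
  rintro y ⟨v, hv⟩
  refine Set.mem_iUnion.2 ⟨v, ?_⟩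
  by_contra hy
  exact mem_outsideBags.1 hv (t v) (fun h => hy (h (W v))) (ht v)

theorem add_finsum_outsideBags_compl_le [Finite α] (hTD : IsTreeDecomp H T B) {ξ : α → ℝ}
    (hξ : ∀ v, 0 ≤ ξ v) (K A : Set τ) :
    ∑ᶠ v ∈ outsideBags B (K ∪ A), ξ v + ∑ᶠ v ∈ outsideBags B (K ∪ Aᶜ), ξ v ≤
      ∑ᶠ v ∈ outsideBags B K, ξ v := by
  have hdisj : Disjoint (outsideBags B (K ∪ A)) (outsideBags B (K ∪ Aᶜ)) := by
    refine Set.disjoint_left.2 fun v hA hAc => ?_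
    obtain ⟨x, hx⟩ := hTD.exists_mem_bag v
    by_cases hxA : x ∈ A
    · exact mem_outsideBags.1 hA x (Or.inr hxA) hx
    · exact mem_outsideBags.1 hAc x (Or.inr hxA) hx
  rw [← finsum_mem_union hdisj (Set.toFinite _) (Set.toFinite _)]
  refine finsum_mem_mono_of_nonneg hξ (Set.toFinite _) (Set.union_subset ?_ ?_) <;>
    simp [outsideBags_union]

theorem exists_deepest_heavy [Finite α] (hTD : IsTreeDecomp H T B) (r : τ) {ξ : α → ℝ} {w : ℝ}
    (hw : 0 ≤ w) {K : Set τ} (hK : w < ∑ᶠ v ∈ outsideBags B K, ξ v) :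
    ∃ x, w < ∑ᶠ v ∈ outsideBags B (K ∪ (T.descendants r x)ᶜ), ξ v ∧
      ∀ y, w < ∑ᶠ v ∈ outsideBags B (K ∪ (T.descendants r y)ᶜ), ξ v →
        T.dist r y ≤ T.dist r x := by
  set heavy := {y | w < ∑ᶠ v ∈ outsideBags B (K ∪ (T.descendants r y)ᶜ), ξ v}
  have hfin : heavy.Finite := by
    refine (hTD.finite_setOf_nonempty_outsideBags_compl r).subset fun y hy => ?_
    obtain ⟨v, hv⟩ : (outsideBags B (K ∪ (T.descendants r y)ᶜ)).Nonempty :=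
      Set.nonempty_iff_ne_empty.2 fun h => by
        simp only [heavy, Set.mem_ofPred_eq, h, finsum_mem_empty] at hy
        linarith
    exact ⟨v, by rw [outsideBags_union] at hv; exact hv.2⟩
  have hr : r ∈ heavy := by simpa [heavy] using hK
  obtain ⟨x, hx, hmax⟩ := hfin.exists_maximalFor (T.dist r) heavy ⟨r, hr⟩
  exact ⟨x, hx, fun y hy => (le_total (T.dist r y) (T.dist r x)).elim id (hmax hy)⟩

theorem exists_finset_forall_finsum_le [Finite α] (hTD : IsTreeDecomp H T B) {ξ : α → ℝ}
    (hξ : ∀ v, 0 ≤ ξ v) {w : ℝ} (hw : 0 ≤ w) (k : ℕ) (K : Set τ)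
    (hK : ∑ᶠ v ∈ outsideBags B K, ξ v ≤ (k + 1) * w) :
    ∃ F : Finset τ, F.card ≤ k ∧ ∀ C : Set α, (H.induce C).Preconnected →
      C ⊆ outsideBags B (K ∪ F) → ∑ᶠ v ∈ C, ξ v ≤ w := by
  classical
  obtain ⟨r⟩ := hTD.isTree.connected.nonempty
  have light : ∀ K : Set τ, ∑ᶠ v ∈ outsideBags B K, ξ v ≤ w → ∀ C : Set α,
      C ⊆ outsideBags B (K ∪ (∅ : Finset τ)) → ∑ᶠ v ∈ C, ξ v ≤ w := fun K hK C hC =>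
    (finsum_mem_mono_of_nonneg hξ (Set.toFinite _) (by simpa using hC)).trans hK
  induction k generalizing K with
  | zero => exact ⟨∅, le_rfl, fun C _ => light K (by simpa using hK) C⟩
  | succ k ih =>
    by_cases hlight : ∑ᶠ v ∈ outsideBags B K, ξ v ≤ w
    · exact ⟨∅, Nat.zero_le _, fun C _ => light K hlight C⟩
    obtain ⟨x, hx_heavy, hx_deepest⟩ := hTD.exists_deepest_heavy r hw (not_le.1 hlight)
    obtain ⟨F, hF, hFC⟩ := ih (K ∪ T.descendants r x) (by
      have := hTD.add_finsum_outsideBags_compl_le hξ K (T.descendants r x)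
      push_cast at hK
      linarith)
    refine ⟨insert x F, (Finset.card_insert_le _ _).trans (by omega), fun C hC hCK => ?_⟩
    simp only [Finset.coe_insert, Set.insert_eq, outsideBags_union, Set.subset_inter_iff] at hCK
    obtain ⟨hCK, hCx, hCF⟩ := hCK
    by_cases hbelow : ∃ v ∈ C, ∃ a ∈ T.descendants r x, v ∈ B a
    · obtain ⟨v₀, hv₀, a₀, ha₀, hv₀a₀⟩ := hbelow
      obtain ⟨z, hz, hzx, hCz⟩ := hTD.exists_subset_outsideBags_compl_descendants hC
        (fun v hv => mem_outsideBags.1 (hCx hv) x rfl) hv₀ hv₀a₀ ha₀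
      refine (finsum_mem_mono_of_nonneg hξ (Set.toFinite _) ?_).trans (not_lt.1 fun hz_heavy =>
        (hx_deepest z hz_heavy).not_gt (hTD.isTree.connected.dist_lt_of_mem_descendants hz hzx))
      rw [outsideBags_union]
      exact Set.subset_inter hCK hCz
    · push Not at hbelow
      refine hFC C hC ?_
      rw [outsideBags_union, outsideBags_union]
      exact Set.subset_inter (Set.subset_inter hCK
        fun v hv => mem_outsideBags.2 fun a ha => hbelow v hv a ha) hCF

end IsTreeDecomp

end TreeDecomp

/-- **Lemma.** Let `(B_x)_{x ∈ V(T)}` be a tree-decomposition of a graph `H` and let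
`ξ : V(H) → ℝ` be non-negative.  For every positive integer `c` there is a set `S ⊆ V(T)`
with `|S| ≤ c − 1` such that every connected component `C` of `H − ⋃_{x ∈ S} B_x` has weight
`ξ(C) ≤ ξ(H)/c`. -/
theorem weighted_separator
    (α τ : Type) [Fintype α] (H : SimpleGraph α) (T : SimpleGraph τ) (B : τ → Set α)
    (hTD : IsTreeDecomp H T B) (ξ : α → ℝ) (hξ : ∀ v, 0 ≤ ξ v) (c : ℕ) (hc : 0 < c) :
    ∃ S : Set τ, S.Finite ∧ S.ncard ≤ c - 1 ∧
      ∀ C : (H.induce (⋃ x ∈ S, B x)ᶜ).ConnectedComponent,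
        (∑ᶠ v ∈ C.supp, ξ (v : α)) ≤ (∑ v : α, ξ v) / c := by
  have htotal : ∑ᶠ v ∈ outsideBags B ∅, ξ v ≤ ((c - 1 : ℕ) + 1) * ((∑ v, ξ v) / c) := by
    rw [outsideBags_empty, finsum_mem_univ, finsum_eq_sum_of_fintype, Nat.cast_pred hc,
      sub_add_cancel, mul_div_cancel₀ _ (Nat.cast_ne_zero.2 hc.ne')]
  obtain ⟨F, hF, hFC⟩ := hTD.exists_finset_forall_finsum_le hξ
    (div_nonneg (Finset.sum_nonneg fun v _ => hξ v) c.cast_nonneg) (c - 1) ∅ htotal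
  refine ⟨F, F.finite_toSet, by rwa [Set.ncard_coe_finset], fun C => ?_⟩
  rw [← finsum_mem_image Subtype.val_injective.injOn]
  refine hFC _ C.preconnected_induce_image_val ?_
  rintro _ ⟨v, -, rfl⟩
  simpa [outsideBags] using v.2
end

section
/- For every real number D and integer n with 1 ≤ D ≤ n, every n-vertex t-Baker graph G contains a set X ⊆ V(G) with |X| ≤ (18·t·n·log n)/D such that G−X has local density at most D. -/
open SimpleGraph

/-- The local density of `G` is at most `D`: every ball of radius `r > 0` has at most
`D·r + 1` vertices. -/
def LocalDensityLE {α : Type} (G : SimpleGraph α) (D : ℝ) : Prop :=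
  ∀ (v : α) (r : ℝ), 0 < r →
    (Nat.card {w : α | G.Reachable v w ∧ (G.dist v w : ℝ) ≤ r} : ℝ) - 1 ≤ D * r

/-- A layering of `G`: a partition of the vertices into integer-indexed (possibly empty)
layers such that the endpoints of every edge lie in the same or consecutive layers. -/
def IsLayering {α : Type} (G : SimpleGraph α) (L : ℤ → Set α) : Prop :=
  (∀ v : α, ∃! s : ℤ, v ∈ L s) ∧
  ∀ u v : α, G.Adj u v → ∀ i j : ℤ, u ∈ L i → v ∈ L j → |i - j| ≤ 1

/-- A `t`-Baker layering: any `r` consecutive layers induce a subgraph of treewidth at most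
`r·t − 1` (equivalently, with a tree decomposition whose bags have at most `r·t` vertices). -/
def IsTBakerLayering {α : Type} (G : SimpleGraph α) (t : ℕ) (L : ℤ → Set α) : Prop :=
  IsLayering G L ∧
  ∀ (s : ℤ) (r : ℕ),
    HasTreeDecompBagsLE (G.induce (⋃ i ∈ Finset.range r, L (s + i))) (r * t)

/-- `G` is `t`-Baker. -/
def IsTBaker {α : Type} (G : SimpleGraph α) (t : ℕ) : Prop :=
  ∃ L : ℤ → Set α, IsTBakerLayering G t L

/-!
Fix a scale `2^j` and group the layers into windows of `2^(j+3)` consecutive layers, in two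
families shifted against each other by `2^(j+2)`. A window `W` has treewidth below `2^(j+3)·t`;
repeatedly cutting, at the deepest node of a rooted tree decomposition, a bag that splits off
more than `s = ⌊D·2^j⌋` vertices leaves only connected pieces of at most `s` vertices after
deleting at most `2^(j+3)·t·|W|/(s+1) ≤ 8·t·|W|/D` vertices. Over both families and the
`log n` scales this deletes at most `16·t·n·log n/D` vertices. A ball of radius
`r ∈ [2^j, 2^(j+1))` in what remains is connected and spans fewer than `2^(j+2)` layers, so it
lies in one window of one family at scale `j` and has at most `D·2^j ≤ D·r` vertices; a ball
with `D·r ≥ n` is trivially small. When `D ≤ 18·t·log n`, deleting every vertex is cheap enough.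
-/

namespace SimpleGraph

variable {V : Type*} {G : SimpleGraph V}

theorem Preconnected.apply_eq_of_forall_adj {β : Sort*} (hG : G.Preconnected) {f : V → β}
    (hf : ∀ u v, G.Adj u v → f u = f v) (u v : V) : f u = f v := by
  obtain ⟨p⟩ := hG u v
  induction p with
  | nil => rfl
  | cons h _ ih => exact (hf _ _ h).trans ih

theorem apply_eq_of_induce_preconnected {β : Sort*} {A : Set V} (hA : (G.induce A).Preconnected)
    {f : V → β} (hf : ∀ u ∈ A, ∀ v ∈ A, G.Adj u v → f u = f v) {u v : V} (hu : u ∈ A)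
    (hv : v ∈ A) : f u = f v :=
  hA.apply_eq_of_forall_adj (f := f ∘ Subtype.val) (fun u' v' h => hf _ u'.2 _ v'.2 h)
    ⟨u, hu⟩ ⟨v, hv⟩

theorem subset_or_disjoint_of_induce_preconnected {A P : Set V}
    (hA : (G.induce A).Preconnected) (hP : ∀ u ∈ A ∩ P, ∀ v ∈ A \ P, ¬G.Adj u v) :
    A ⊆ P ∨ Disjoint A P := by
  have hconst : ∀ u ∈ A, ∀ v ∈ A, G.Adj u v → (u ∈ P) = (v ∈ P) := by
    intro u hu v hv huv
    refine propext ⟨fun huP => ?_, fun hvP => ?_⟩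
    · by_contra hvP
      exact hP u ⟨hu, huP⟩ v ⟨hv, hvP⟩ huv
    · by_contra huP
      exact hP v ⟨hv, hvP⟩ u ⟨hu, huP⟩ huv.symm
  by_cases hAP : (A ∩ P).Nonempty
  · obtain ⟨a, haA, haP⟩ := hAP
    exact Or.inl fun b hb => cast (apply_eq_of_induce_preconnected hA hconst haA hb) haP
  · exact Or.inr (Set.disjoint_iff_inter_eq_empty.mpr (Set.not_nonempty_iff_eq_empty.mp hAP))

namespace IsTree

variable {τ : Type*} {T : SimpleGraph τ} (hT : T.IsTree) (ρ : τ)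

noncomputable def rootPath (z : τ) : T.Walk ρ z := (hT.existsUnique_path ρ z).choose

theorem isPath_rootPath (z : τ) : (hT.rootPath ρ z).IsPath :=
  (hT.existsUnique_path ρ z).choose_spec.1

theorem rootPath_eq {z : τ} {p : T.Walk ρ z} (hp : p.IsPath) : hT.rootPath ρ z = p :=
  ((hT.existsUnique_path ρ z).choose_spec.2 p hp).symm

noncomputable def depth (z : τ) : ℕ := (hT.rootPath ρ z).length

/-- The vertex at depth `k` on the path from the root to `z` (or `z` itself if `depth z ≤ k`). -/
noncomputable def ancestor (z : τ) (k : ℕ) : τ := (hT.rootPath ρ z).getVert k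

def descendants (x : τ) : Set τ := {z | hT.ancestor ρ z (hT.depth ρ x) = x}

theorem depth_root : hT.depth ρ ρ = 0 := by
  rw [depth, hT.rootPath_eq ρ Walk.IsPath.nil, Walk.length_nil]

theorem ancestor_zero (z : τ) : hT.ancestor ρ z 0 = ρ := Walk.getVert_zero _

theorem ancestor_depth (z : τ) : hT.ancestor ρ z (hT.depth ρ z) = z := Walk.getVert_length _

theorem depth_ancestor {z : τ} {k : ℕ} (hk : k ≤ hT.depth ρ z) :
    hT.depth ρ (hT.ancestor ρ z k) = k := by
  show (hT.rootPath ρ ((hT.rootPath ρ z).getVert k)).length = k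
  rw [hT.rootPath_eq ρ ((hT.isPath_rootPath ρ z).take k), Walk.take_length]
  exact min_eq_left hk

theorem rootPath_adj {a c : τ} (h : T.Adj a c) :
    hT.rootPath ρ c = (hT.rootPath ρ a).concat h ∨
      hT.rootPath ρ a = (hT.rootPath ρ c).concat h.symm := by
  by_cases hc : c ∈ (hT.rootPath ρ a).support
  · exact Or.inr (hT.isAcyclic.path_concat (hT.isPath_rootPath ρ c) (hT.isPath_rootPath ρ a)
      h.symm hc)
  · exact Or.inl (hT.rootPath_eq ρ ((hT.isPath_rootPath ρ a).concat hc h))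

theorem depth_le_depth_add_one_of_adj {a c : τ} (h : T.Adj a c) :
    hT.depth ρ a ≤ hT.depth ρ c + 1 := by
  unfold depth
  rcases hT.rootPath_adj ρ h with h' | h'
  · rw [h', Walk.length_concat]; omega
  · rw [h', Walk.length_concat]

theorem ancestor_eq_of_adj {a c : τ} (h : T.Adj a c) {k : ℕ} (ha : k ≤ hT.depth ρ a)
    (hc : k ≤ hT.depth ρ c) : hT.ancestor ρ a k = hT.ancestor ρ c k := by
  unfold ancestor
  rcases hT.rootPath_adj ρ h with h' | h'
  · rw [h', Walk.concat_eq_append, Walk.getVert_append',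
      if_pos (show k ≤ (hT.rootPath ρ a).length from ha)]
  · rw [h', Walk.concat_eq_append, Walk.getVert_append',
      if_pos (show k ≤ (hT.rootPath ρ c).length from hc)]

theorem mem_descendants_root (z : τ) : z ∈ hT.descendants ρ ρ := by
  show hT.ancestor ρ z (hT.depth ρ ρ) = ρ
  rw [depth_root, ancestor_zero]

theorem depth_le_of_mem_descendants {x z : τ} (hz : z ∈ hT.descendants ρ x) :
    hT.depth ρ x ≤ hT.depth ρ z := by
  by_contra! hlt
  have hzx : z = x := by
    rw [← hz, ancestor, Walk.getVert_of_length_le _ hlt.le]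
  exact hlt.ne (hzx ▸ rfl)

theorem depth_lt_of_mem_descendants {x z : τ} (hz : z ∈ hT.descendants ρ x) (hne : z ≠ x) :
    hT.depth ρ x < hT.depth ρ z := by
  refine (hT.depth_le_of_mem_descendants ρ hz).lt_of_ne fun heq => hne ?_
  rw [← hz, heq, ancestor_depth]

theorem mem_descendants_of_adj {x z c : τ} (hz : z ∈ hT.descendants ρ x) (hne : z ≠ x)
    (h : T.Adj z c) : c ∈ hT.descendants ρ x := by
  have hlt := hT.depth_lt_of_mem_descendants ρ hz hne
  have hle := hT.depth_le_depth_add_one_of_adj ρ h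
  show hT.ancestor ρ c (hT.depth ρ x) = x
  rw [← hT.ancestor_eq_of_adj ρ h hlt.le (by omega)]
  exact hz

end IsTree

end SimpleGraph

/-- A tree decomposition of `G[S]` with bags in the ambient vertex type: it restricts to every
`S' ⊆ S` with the same `T` and `B`. -/
structure IsTreeDecompOn {V τ : Type*} (G : SimpleGraph V) (S : Set V) (T : SimpleGraph τ)
    (B : τ → Set V) : Prop where
  isTree : T.IsTree
  edge_cover : ∀ u ∈ S, ∀ v ∈ S, G.Adj u v → ∃ x, u ∈ B x ∧ v ∈ B x
  bags_connected : ∀ v ∈ S, (T.induce {x | v ∈ B x}).Connected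

namespace IsTreeDecompOn

variable {V τ : Type*} {G : SimpleGraph V} {T : SimpleGraph τ} {B : τ → Set V} {S : Set V}

theorem mono (h : IsTreeDecompOn G S T B) {S' : Set V} (hS : S' ⊆ S) :
    IsTreeDecompOn G S' T B where
  isTree := h.isTree
  edge_cover u hu v hv := h.edge_cover u (hS hu) v (hS hv)
  bags_connected v hv := h.bags_connected v (hS hv)

theorem exists_mem_bag (h : IsTreeDecompOn G S T B) {v : V} (hv : v ∈ S) : ∃ x, v ∈ B x :=
  let ⟨⟨x, hx⟩⟩ := (h.bags_connected v hv).nonempty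
  ⟨x, hx⟩

variable (h : IsTreeDecompOn G S T B) (ρ : τ)

def below (x : τ) : Set V := {v ∈ S | {y | v ∈ B y} ⊆ h.isTree.descendants ρ x}

theorem below_root : h.below ρ ρ = S :=
  Set.sep_eq_self_iff_mem_true.mpr fun _ _ z _ => h.isTree.mem_descendants_root ρ z

theorem not_adj_of_mem_below {x : τ} {u v : V} (hu : u ∈ h.below ρ x \ B x)
    (hv : v ∈ S \ (h.below ρ x ∪ B x)) : ¬G.Adj u v := by
  intro huv
  obtain ⟨z, hzu, hzv⟩ := h.edge_cover u hu.1.1 v hv.1 huv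
  refine hv.2 (Or.inl ⟨hv.1, fun y hy => ?_⟩)
  have hconst : ∀ a ∈ {y | v ∈ B y}, ∀ b ∈ {y | v ∈ B y}, T.Adj a b →
      (a ∈ h.isTree.descendants ρ x) = (b ∈ h.isTree.descendants ρ x) := by
    intro a ha b hb hab
    have hax : a ≠ x := fun hax => hv.2 (Or.inr (hax ▸ ha))
    have hbx : b ≠ x := fun hbx => hv.2 (Or.inr (hbx ▸ hb))
    exact propext ⟨fun hda => h.isTree.mem_descendants_of_adj ρ hda hax hab,
      fun hdb => h.isTree.mem_descendants_of_adj ρ hdb hbx hab.symm⟩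
  exact cast (apply_eq_of_induce_preconnected (h.bags_connected v hv.1).preconnected hconst
    hzv hy) (hu.1.2 hzu)

theorem exists_child_of_induce_preconnected {x : τ} {A : Set V} (hAx : A ⊆ h.below ρ x \ B x)
    (hA : (G.induce A).Preconnected) (hne : A.Nonempty) :
    ∃ y, h.isTree.depth ρ y = h.isTree.depth ρ x + 1 ∧ A ⊆ h.below ρ y := by
  set hT := h.isTree
  set d := hT.depth ρ x
  have hAS : A ⊆ S := fun a ha => (hAx ha).1.1
  have hdeep : ∀ a ∈ A, ∀ z ∈ {y | a ∈ B y}, d + 1 ≤ hT.depth ρ z := fun a ha z hz =>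
    hT.depth_lt_of_mem_descendants ρ ((hAx ha).1.2 hz) fun hzx => (hAx ha).2 (hzx ▸ hz)
  -- the ancestor at depth `d + 1` is constant on each bag-subtree, hence along the edges of `A`
  have hlocal : ∀ a ∈ A, ∀ z ∈ {y | a ∈ B y}, ∀ z' ∈ {y | a ∈ B y},
      hT.ancestor ρ z (d + 1) = hT.ancestor ρ z' (d + 1) := fun a ha z hz z' hz' =>
    apply_eq_of_induce_preconnected (h.bags_connected a (hAS ha)).preconnected
      (fun b hb c hc hbc => hT.ancestor_eq_of_adj ρ hbc (hdeep a ha b hb) (hdeep a ha c hc)) hz hz'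
  obtain ⟨a₀, ha₀⟩ := hne
  obtain ⟨z₀, hz₀⟩ := h.exists_mem_bag (hAS ha₀)
  set y := hT.ancestor ρ z₀ (d + 1)
  have hglobal : ∀ a ∈ A, ∀ z ∈ {y | a ∈ B y}, hT.ancestor ρ z (d + 1) = y := by
    intro a ha
    refine cast (apply_eq_of_induce_preconnected (f := fun a =>
      ∀ z ∈ {y | a ∈ B y}, hT.ancestor ρ z (d + 1) = y) hA ?_ ha₀ ha)
      fun z hz => hlocal a₀ ha₀ z hz z₀ hz₀
    intro u hu w hw huw
    obtain ⟨zb, hzu, hzw⟩ := h.edge_cover u (hAS hu) w (hAS hw) huw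
    exact propext ⟨fun H z hz => (hlocal w hw z hz zb hzw).trans (H zb hzu),
      fun H z hz => (hlocal u hu z hz zb hzu).trans (H zb hzw)⟩
  have hy : hT.depth ρ y = d + 1 := hT.depth_ancestor ρ (hdeep a₀ ha₀ z₀ hz₀)
  refine ⟨y, hy, fun a ha => ⟨hAS ha, fun z hz => ?_⟩⟩
  show hT.ancestor ρ z (hT.depth ρ y) = y
  rw [hy]
  exact hglobal a ha z hz

theorem exists_deepest [Finite V] {s : ℕ} (hs : s < S.ncard) :
    ∃ x, s < (h.below ρ x).ncard ∧
      ∀ y, s < (h.below ρ y).ncard → h.isTree.depth ρ y ≤ h.isTree.depth ρ x := by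
  set hT := h.isTree
  set Γ := {x | s < (h.below ρ x).ncard}
  have : Nonempty τ := ⟨ρ⟩
  choose! rep hrep using fun v (hv : v ∈ S) => h.exists_mem_bag hv
  obtain ⟨M, hM⟩ := ((Set.toFinite S).image fun v => hT.depth ρ (rep v)).bddAbove
  have hbdd : BddAbove (hT.depth ρ '' Γ) := by
    refine ⟨M, ?_⟩
    rintro _ ⟨x, hx, rfl⟩
    obtain ⟨v, hv⟩ := Set.nonempty_of_ncard_ne_zero (s := h.below ρ x) (by
      change s < _ at hx; omega)
    exact (hT.depth_le_of_mem_descendants ρ (hv.2 (hrep v hv.1))).trans (hM ⟨v, hv.1, rfl⟩)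
  have hΓ : ρ ∈ Γ := by
    change s < _
    rwa [h.below_root]
  obtain ⟨x, hx, hxmax⟩ := Nat.sSup_mem ⟨_, Set.mem_image_of_mem _ hΓ⟩ hbdd
  exact ⟨x, hx, fun y hy => hxmax ▸ le_csSup hbdd (Set.mem_image_of_mem _ hy)⟩

theorem exists_separation [Finite V] (h : IsTreeDecompOn G S T B) {s : ℕ} (hs : s < S.ncard) :
    ∃ x W, W ⊆ S ∧ s < W.ncard ∧ (∀ u ∈ W \ B x, ∀ v ∈ S \ (W ∪ B x), ¬G.Adj u v) ∧
      ∀ A ⊆ W \ B x, (G.induce A).Preconnected → A.ncard ≤ s := by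
  obtain ⟨ρ⟩ := h.isTree.connected.nonempty
  obtain ⟨x, hx, hdeepest⟩ := h.exists_deepest ρ hs
  refine ⟨x, h.below ρ x, Set.sep_subset _ _, hx, fun u hu v hv => h.not_adj_of_mem_below ρ hu hv,
    fun A hAx hA => ?_⟩
  rcases A.eq_empty_or_nonempty with rfl | hne
  · simp
  obtain ⟨y, hy, hAy⟩ := h.exists_child_of_induce_preconnected ρ hAx hA hne
  have hys : (h.below ρ y).ncard ≤ s := by
    by_contra! hys
    have := hdeepest y hys
    omega
  exact (Set.ncard_le_ncard hAy (Set.toFinite _)).trans hys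

/-- Each separation deletes at most `m` vertices and splits off more than `s`. -/
theorem exists_sparsifier [Finite V] (h : IsTreeDecompOn G S T B) {m : ℕ}
    (hB : ∀ x, (B x).ncard ≤ m) (s : ℕ) :
    ∃ X ⊆ S, (s + 1) * X.ncard ≤ m * S.ncard ∧
      ∀ A ⊆ S \ X, (G.induce A).Preconnected → A.ncard ≤ s := by
  induction hn : S.ncard using Nat.strong_induction_on generalizing S with
  | _ n ih =>
  subst hn
  by_cases hsmall : S.ncard ≤ s
  · exact ⟨∅, Set.empty_subset _, by simp, fun A hA _ =>
      (Set.ncard_le_ncard (hA.trans Set.sdiff_subset) (Set.toFinite _)).trans hsmall⟩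
  obtain ⟨x, W, hWS, hW, hsep, hpieces⟩ := h.exists_separation (not_le.mp hsmall)
  set S' := S \ (W ∪ B x)
  have hS' : S'.ncard + (s + 1) ≤ S.ncard := by
    have h₁ : (S ∩ (W ∪ B x)).ncard + S'.ncard = S.ncard :=
      Set.ncard_inter_add_ncard_sdiff_eq_ncard S (W ∪ B x)
    have h₂ : W.ncard ≤ (S ∩ (W ∪ B x)).ncard :=
      Set.ncard_le_ncard (fun w hw => ⟨hWS hw, Or.inl hw⟩) (Set.toFinite _)
    omega
  obtain ⟨X', hX'S', hX', hsmall'⟩ := ih S'.ncard (by omega) (h.mono Set.sdiff_subset) rfl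
  refine ⟨(B x ∩ S) ∪ X', Set.union_subset Set.inter_subset_right
    (hX'S'.trans Set.sdiff_subset), ?_, fun A hA hAconn => ?_⟩
  · have hbag : (B x ∩ S).ncard ≤ m :=
      (Set.ncard_le_ncard Set.inter_subset_left (Set.toFinite _)).trans (hB x)
    calc (s + 1) * ((B x ∩ S) ∪ X').ncard
        ≤ (s + 1) * ((B x ∩ S).ncard + X'.ncard) :=
          Nat.mul_le_mul_left _ (Set.ncard_union_le _ _)
      _ ≤ (s + 1) * m + m * S'.ncard := by rw [mul_add]; exact Nat.add_le_add (by gcongr) hX'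
      _ = m * (S'.ncard + (s + 1)) := by ring
      _ ≤ m * S.ncard := Nat.mul_le_mul_left _ hS'
  have hAS : ∀ a ∈ A, a ∈ S ∧ a ∉ B x ∧ a ∉ X' := fun a ha =>
    ⟨(hA ha).1, fun hb => (hA ha).2 (Or.inl ⟨hb, (hA ha).1⟩), fun hb => (hA ha).2 (Or.inr hb)⟩
  have hcut : ∀ u ∈ A ∩ W, ∀ v ∈ A \ W, ¬G.Adj u v := fun u hu v hv =>
    hsep u ⟨hu.2, (hAS u hu.1).2.1⟩ v
      ⟨(hAS v hv.1).1, fun hvW => hvW.elim hv.2 (hAS v hv.1).2.1⟩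
  rcases subset_or_disjoint_of_induce_preconnected hAconn hcut with hAW | hAW
  · exact hpieces A (fun a ha => ⟨hAW ha, (hAS a ha).2.1⟩) hAconn
  · refine hsmall' A (fun a ha => ⟨⟨(hAS a ha).1, fun haW => ?_⟩, (hAS a ha).2.2⟩) hAconn
    exact haW.elim (Set.disjoint_left.mp hAW ha) (hAS a ha).2.1

end IsTreeDecompOn

theorem HasTreeDecompBagsLE.exists_sparsifier {V : Type} [Finite V] {G : SimpleGraph V}
    {S : Set V} {m : ℕ} (h : HasTreeDecompBagsLE (G.induce S) m) (s : ℕ) :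
    ∃ X ⊆ S, (s + 1) * X.ncard ≤ m * S.ncard ∧
      ∀ A ⊆ S \ X, (G.induce A).Preconnected → A.ncard ≤ s := by
  obtain ⟨τ, T, B, hdec, hB⟩ := h
  have hdec' : IsTreeDecompOn G S T fun x => Subtype.val '' B x := by
    refine ⟨hdec.isTree, fun u hu v hv huv => ?_, fun v hv => ?_⟩
    · obtain ⟨x, hux, hvx⟩ := hdec.edge_cover ⟨u, hu⟩ ⟨v, hv⟩ huv
      exact ⟨x, ⟨_, hux, rfl⟩, ⟨_, hvx, rfl⟩⟩
    · have hbags : {x | v ∈ Subtype.val '' B x} = {x | ⟨v, hv⟩ ∈ B x} := by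
        ext x
        exact ⟨fun ⟨w, hw, hwv⟩ => (Subtype.ext hwv : w = ⟨v, hv⟩) ▸ hw, fun hx => ⟨_, hx, rfl⟩⟩
      rw [hbags]
      exact hdec.bags_connected ⟨v, hv⟩
  refine hdec'.exists_sparsifier (fun x => ?_) s
  rw [Set.ncard_image_of_injective _ Subtype.val_injective]
  exact (hB x).2

theorem exists_fiberwise_sparsifier {V : Type} {ι : Type*} [Fintype V] {G : SimpleGraph V}
    (f : V → ι) {m : ℕ} (hf : ∀ i, HasTreeDecompBagsLE (G.induce (f ⁻¹' {i})) m) (s : ℕ) :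
    ∃ X : Finset V, (s + 1) * X.card ≤ m * Fintype.card V ∧
      ∀ i, ∀ A ⊆ f ⁻¹' {i} \ X, (G.induce A).Preconnected → A.ncard ≤ s := by
  classical
  choose Y hYf hY hYsmall using fun i => (hf i).exists_sparsifier s
  set X : Finset V := {v | v ∈ Y (f v)}
  have hXfiber : ∀ i, ({v ∈ X | f v = i} : Finset V).card = (Y i).ncard := by
    intro i
    rw [← Set.ncard_coe_finset]
    congr 1
    ext v
    simp only [X, Finset.coe_filter, Finset.mem_filter, Finset.mem_univ, true_and]
    exact ⟨fun ⟨hv, hfv⟩ => hfv ▸ hv, fun hv => ⟨(hYf i hv : f v = i) ▸ hv, hYf i hv⟩⟩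
  have hfiber : ∀ i, ({v | f v = i} : Finset V).card = (f ⁻¹' {i}).ncard := by
    intro i
    rw [← Set.ncard_coe_finset]
    simp [Set.preimage, Finset.coe_filter]
  refine ⟨X, ?_, fun i A hA hAconn => hYsmall i A (fun a ha => ⟨(hA ha).1, fun haY => ?_⟩) hAconn⟩
  · calc (s + 1) * X.card
        = ∑ i ∈ Finset.univ.image f, (s + 1) * (Y i).ncard := by
          rw [Finset.card_eq_sum_card_fiberwise (fun v _ => Finset.mem_image_of_mem f
            (Finset.mem_univ v)), Finset.mul_sum]
          simp only [hXfiber]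
      _ ≤ ∑ i ∈ Finset.univ.image f, m * (f ⁻¹' {i}).ncard :=
          Finset.sum_le_sum fun i _ => hY i
      _ = m * Fintype.card V := by
          rw [← Finset.mul_sum, ← Finset.card_univ, Finset.card_eq_sum_card_image f]
          simp only [hfiber]
  · have hfa : f a = i := (hA ha).1
    exact (hA ha).2 (by simp [X, hfa, haY])

theorem SimpleGraph.Walk.abs_sub_le_length {V : Type*} {G : SimpleGraph V} {ℓ : V → ℤ}
    (hℓ : ∀ u v, G.Adj u v → |ℓ u - ℓ v| ≤ 1) {u v : V} (p : G.Walk u v) :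
    |ℓ u - ℓ v| ≤ p.length := by
  induction p with
  | nil => simp
  | cons h _ ih =>
    rw [Walk.length_cons, Nat.cast_succ]
    exact (abs_sub_le _ _ _).trans (by linarith [hℓ _ _ h])

def windowIndex {V : Type*} (ℓ : V → ℤ) (H : ℕ) (o : ℤ) (v : V) : ℤ := (ℓ v - o) / H

namespace IsLayering

variable {α : Type} {G : SimpleGraph α} {L : ℤ → Set α} (hL : IsLayering G L)

noncomputable def layer (v : α) : ℤ := (hL.1 v).exists.choose

theorem mem_layer (v : α) : v ∈ L (hL.layer v) := (hL.1 v).exists.choose_spec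

theorem layer_eq {v : α} {s : ℤ} (hv : v ∈ L s) : hL.layer v = s :=
  (hL.1 v).unique (hL.mem_layer v) hv

theorem abs_layer_sub_le_one {u v : α} (h : G.Adj u v) : |hL.layer u - hL.layer v| ≤ 1 :=
  hL.2 u v h _ _ (hL.mem_layer u) (hL.mem_layer v)

theorem windowIndex_preimage {H : ℕ} (hH : 0 < H) (o k : ℤ) :
    windowIndex hL.layer H o ⁻¹' {k} = ⋃ i ∈ Finset.range H, L (k * H + o + i) := by
  ext v
  simp only [windowIndex, Set.mem_preimage, Set.mem_singleton_iff,
    Int.ediv_eq_iff_of_pos (by omega : 0 < (H : ℤ)), Set.mem_iUnion, Finset.mem_range, exists_prop]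
  constructor
  · rintro ⟨h₁, h₂⟩
    refine ⟨(hL.layer v - o - k * H).toNat, by omega, ?_⟩
    convert hL.mem_layer v
    omega
  · rintro ⟨i, hi, hv⟩
    have := hL.layer_eq hv
    omega

end IsLayering

theorem IsTBakerLayering.one_le {α : Type} {G : SimpleGraph α} {t : ℕ} {L : ℤ → Set α}
    (hL : IsTBakerLayering G t L) (v : α) : 1 ≤ t := by
  obtain ⟨τ, T, B, hdec, hB⟩ := hL.2 (hL.1.layer v) 1
  have hv : v ∈ ⋃ i ∈ Finset.range 1, L (hL.1.layer v + i) := by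
    simpa using hL.1.mem_layer v
  obtain ⟨⟨x, hx⟩⟩ := (hdec.bags_connected ⟨v, hv⟩).nonempty
  have := (Set.ncard_pos (hB x).1).mpr ⟨_, hx⟩
  have := (hB x).2
  omega

theorem IsTBakerLayering.hasTreeDecompBagsLE_window {α : Type} {G : SimpleGraph α} {t : ℕ}
    {L : ℤ → Set α} (hL : IsTBakerLayering G t L) {H : ℕ} (hH : 0 < H) (o k : ℤ) :
    HasTreeDecompBagsLE (G.induce (windowIndex hL.1.layer H o ⁻¹' {k})) (H * t) := by
  rw [hL.1.windowIndex_preimage hH]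
  exact hL.2 _ H

theorem exists_offset_ediv_eq {M lo hi : ℤ} (hM : 0 < M) (h : hi - lo < M) :
    ∃ o ∈ ({0, M} : Set ℤ), ∀ x, lo ≤ x → x ≤ hi → (x - o) / (2 * M) = (lo - o) / (2 * M) := by
  have hN : 0 < 2 * M := by omega
  have key : ∀ o, lo / (2 * M) * (2 * M) ≤ lo - o → lo - o < lo / (2 * M) * (2 * M) + M →
      ∀ x, lo ≤ x → x ≤ hi → (x - o) / (2 * M) = (lo - o) / (2 * M) := by
    intro o h₁ h₂ x hx₁ hx₂
    rw [(Int.ediv_eq_iff_of_pos (y := lo / (2 * M)) hN).mpr ⟨by linarith, by linarith⟩,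
      (Int.ediv_eq_iff_of_pos hN).mpr ⟨h₁, by linarith⟩]
  have hdiv := Int.mul_ediv_add_emod lo (2 * M)
  have hmod₀ := Int.emod_nonneg lo hN.ne'
  have hmod₁ := Int.emod_lt_of_pos lo hN
  by_cases hq : lo % (2 * M) < M
  · exact ⟨0, by simp, key 0 (by linarith) (by linarith)⟩
  · exact ⟨M, by simp, key M (by linarith) (by linarith)⟩

theorem exists_window_of_abs_sub_le {V : Type*} {ℓ : V → ℤ} {c : ℤ} {R : ℕ} {A : Set V}
    (hA : ∀ a ∈ A, |ℓ a - c| ≤ R) :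
    ∃ o ∈ ({0, 2 ^ (Nat.log 2 R + 2)} : Set ℤ), ∃ k,
      A ⊆ windowIndex ℓ (2 ^ (Nat.log 2 R + 3)) o ⁻¹' {k} := by
  set j := Nat.log 2 R
  have hRj : (R : ℤ) < 2 ^ (j + 1) := by exact_mod_cast Nat.lt_pow_succ_log_self one_lt_two R
  obtain ⟨o, ho, hfit⟩ := exists_offset_ediv_eq (M := 2 ^ (j + 2)) (lo := c - R) (hi := c + R)
    (by positivity) (by rw [pow_succ]; omega)
  refine ⟨o, ho, (c - R - o) / (2 * 2 ^ (j + 2)), fun a ha => ?_⟩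
  have habs := abs_le.mp (hA a ha)
  have hwindow : ((2 ^ (j + 3) : ℕ) : ℤ) = 2 * 2 ^ (j + 2) := by push_cast; ring
  simp only [windowIndex, Set.mem_preimage, Set.mem_singleton_iff, hwindow]
  exact hfit _ (by linarith) (by linarith)

section Ball

variable {V W : Type*} {G : SimpleGraph V} {G' : SimpleGraph W}

theorem induce_preconnected_image_ball (φ : G' →g G) (v : W) (R : ℕ) :
    (G.induce (φ '' {w | G'.Reachable v w ∧ G'.dist v w ≤ R})).Preconnected := by
  classical
  set A := φ '' {w | G'.Reachable v w ∧ G'.dist v w ≤ R}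
  have hv : φ v ∈ A := ⟨v, ⟨.refl v, by simp⟩, rfl⟩
  have key : ∀ a (ha : a ∈ A), (G.induce A).Reachable ⟨φ v, hv⟩ ⟨a, ha⟩ := by
    rintro _ ⟨w, ⟨hreach, hdist⟩, rfl⟩
    obtain ⟨p, hp⟩ := hreach.exists_walk_length_eq_dist
    have hsupp : ∀ a ∈ (p.map φ).support, a ∈ A := by
      intro a ha
      rw [Walk.support_map, List.mem_map] at ha
      obtain ⟨u, hu, rfl⟩ := ha
      refine ⟨u, ⟨⟨p.takeUntil u hu⟩, ?_⟩, rfl⟩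
      calc G'.dist v u ≤ (p.takeUntil u hu).length := dist_le _
        _ ≤ p.length := Walk.length_takeUntil_le_length _ _
        _ ≤ R := hp ▸ hdist
    exact ⟨(p.map φ).induce A hsupp⟩
  rintro ⟨a, ha⟩ ⟨b, hb⟩
  exact (key a ha).symm.trans (key b hb)

theorem abs_sub_le_of_mem_image_ball (φ : G' →g G) {ℓ : V → ℤ}
    (hℓ : ∀ u v, G.Adj u v → |ℓ u - ℓ v| ≤ 1) {v : W} {R : ℕ} {a : V}
    (ha : a ∈ φ '' {w | G'.Reachable v w ∧ G'.dist v w ≤ R}) : |ℓ a - ℓ (φ v)| ≤ R := by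
  obtain ⟨w, ⟨hreach, hdist⟩, rfl⟩ := ha
  obtain ⟨p, hp⟩ := hreach.exists_walk_length_eq_dist
  calc |ℓ (φ w) - ℓ (φ v)| = |ℓ (φ v) - ℓ (φ w)| := abs_sub_comm _ _
    _ ≤ (p.map φ).length := (p.map φ).abs_sub_le_length hℓ
    _ ≤ R := by rw [Walk.length_map, hp]; exact_mod_cast hdist

theorem natCard_ball_eq_ncard (G' : SimpleGraph W) (v : W) {r : ℝ} (hr : 0 ≤ r) :
    Nat.card {w | G'.Reachable v w ∧ (G'.dist v w : ℝ) ≤ r} =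
      {w | G'.Reachable v w ∧ G'.dist v w ≤ ⌊r⌋₊}.ncard := by
  rw [Nat.card_coe_set_eq]
  congr 1
  ext w
  simp [Nat.le_floor_iff hr]

end Ball

theorem localDensityLE_deleteVerts {V : Type} [Fintype V] {G : SimpleGraph V} {ℓ : V → ℤ}
    (hℓ : ∀ u v, G.Adj u v → |ℓ u - ℓ v| ≤ 1) {D : ℝ} (hD : 0 < D) {K : ℕ}
    (hK : (Fintype.card V : ℝ) ≤ D * 2 ^ K) {X : Finset V}
    (hX : ∀ j < K, ∀ o ∈ ({0, 2 ^ (j + 2)} : Set ℤ), ∀ k,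
      ∀ A ⊆ windowIndex ℓ (2 ^ (j + 3)) o ⁻¹' {k} \ X,
        (G.induce A).Preconnected → (A.ncard : ℝ) ≤ D * 2 ^ j) :
    LocalDensityLE (deleteVerts G X) D := by
  intro v r hr
  set G' := deleteVerts G X
  rw [natCard_ball_eq_ncard G' v hr.le, ← Set.ncard_image_of_injective _ Subtype.val_injective]
  set R := ⌊r⌋₊
  set A := Subtype.val '' {w | G'.Reachable v w ∧ G'.dist v w ≤ R}
  rcases Nat.eq_zero_or_pos R with hR | hR
  · have hA : A ⊆ {v.1} := by
      rintro _ ⟨w, ⟨hreach, hdist⟩, rfl⟩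
      rw [hR, Nat.le_zero, hreach.dist_eq_zero_iff] at hdist
      exact hdist ▸ rfl
    have : (A.ncard : ℝ) ≤ 1 := by
      exact_mod_cast (Set.ncard_le_ncard hA (Set.toFinite _)).trans_eq (Set.ncard_singleton _)
    nlinarith
  by_cases hbig : (Fintype.card V : ℝ) ≤ D * r
  · have : A.ncard ≤ Fintype.card V := by
      simpa using Set.ncard_le_ncard (Set.subset_univ A) (Set.toFinite _)
    have : (A.ncard : ℝ) ≤ Fintype.card V := by exact_mod_cast this
    linarith
  set j := Nat.log 2 R
  have hjr : (2 : ℝ) ^ j ≤ r :=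
    le_trans (by exact_mod_cast Nat.pow_log_le_self 2 hR.ne') (Nat.floor_le hr.le)
  have hjK : j < K := by
    have : D * 2 ^ j < D * 2 ^ K := by
      calc D * 2 ^ j ≤ D * r := by gcongr
        _ < Fintype.card V := not_le.mp hbig
        _ ≤ D * 2 ^ K := hK
    exact (pow_lt_pow_iff_right₀ one_lt_two).mp (lt_of_mul_lt_mul_left this hD.le)
  let φ : G' →g G := ⟨Subtype.val, id⟩
  obtain ⟨o, ho, k, hAk⟩ := exists_window_of_abs_sub_le (c := ℓ v) (A := A)
    fun a ha => abs_sub_le_of_mem_image_ball φ hℓ ha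
  have hAX : A ⊆ windowIndex ℓ (2 ^ (j + 3)) o ⁻¹' {k} \ X := by
    rintro _ ⟨w, hw, rfl⟩
    exact ⟨hAk ⟨w, hw, rfl⟩, w.2⟩
  calc (A.ncard : ℝ) - 1 ≤ D * 2 ^ j := by
        linarith [hX j hjK o ho k A hAX (induce_preconnected_image_ball φ v R)]
    _ ≤ D * r := by gcongr

theorem le_div_of_floor_add_one_mul_le {D : ℝ} (hD : 0 < D) {j c N : ℕ}
    (h : (⌊D * 2 ^ j⌋₊ + 1) * c ≤ 2 ^ (j + 3) * N) : (c : ℝ) ≤ 8 * N / D := by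
  rw [le_div_iff₀ hD]
  have h₁ : D * 2 ^ j < ⌊D * 2 ^ j⌋₊ + 1 := Nat.lt_floor_add_one _
  have h₂ : ((⌊D * 2 ^ j⌋₊ : ℝ) + 1) * c ≤ 2 ^ (j + 3) * N := by exact_mod_cast h
  have h₃ : 2 ^ j * (c * D) ≤ 2 ^ j * (8 * N) := by
    calc 2 ^ j * (c * D) = D * 2 ^ j * c := by ring
      _ ≤ (⌊D * 2 ^ j⌋₊ + 1) * c := by gcongr
      _ ≤ 2 ^ (j + 3) * N := h₂
      _ = 2 ^ j * (8 * N) := by ring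
  exact le_of_mul_le_mul_left h₃ (by positivity)

theorem IsTBakerLayering.exists_multiscale_sparsifier {V : Type} [Fintype V]
    {G : SimpleGraph V} {t : ℕ} {L : ℤ → Set V} (hL : IsTBakerLayering G t L) {D : ℝ}
    (hD : 0 < D) (K : ℕ) :
    ∃ X : Finset V, (X.card : ℝ) ≤ 16 * K * t * Fintype.card V / D ∧
      ∀ j < K, ∀ o ∈ ({0, 2 ^ (j + 2)} : Set ℤ), ∀ k,
        ∀ A ⊆ windowIndex hL.1.layer (2 ^ (j + 3)) o ⁻¹' {k} \ X,
          (G.induce A).Preconnected → (A.ncard : ℝ) ≤ D * 2 ^ j := by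
  classical
  choose Y hY hYsmall using fun (j : ℕ) (o : ℤ) => exists_fiberwise_sparsifier _
    (hL.hasTreeDecompBagsLE_window (H := 2 ^ (j + 3)) (by positivity) o) ⌊D * 2 ^ j⌋₊
  set X := (Finset.range K).biUnion fun j => Y j 0 ∪ Y j (2 ^ (j + 2))
  have hYcard : ∀ j o, ((Y j o).card : ℝ) ≤ 8 * (t * Fintype.card V : ℕ) / D := fun j o =>
    le_div_of_floor_add_one_mul_le hD ((hY j o).trans_eq (mul_assoc _ _ _))
  refine ⟨X, ?_, fun j hj o ho k A hA hAconn => ?_⟩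
  · calc (X.card : ℝ)
        ≤ ∑ j ∈ Finset.range K, (((Y j 0).card : ℝ) + (Y j (2 ^ (j + 2))).card) := by
          exact_mod_cast Finset.card_biUnion_le.trans
            (Finset.sum_le_sum fun j _ => Finset.card_union_le _ _)
      _ ≤ ∑ _j ∈ Finset.range K, 16 * (t * Fintype.card V : ℕ) / D :=
          Finset.sum_le_sum fun j _ => by
            have h16 : 16 * (t * Fintype.card V : ℕ) / D
                = 8 * (t * Fintype.card V : ℕ) / D + 8 * (t * Fintype.card V : ℕ) / D := by ring
            linarith [hYcard j 0, hYcard j (2 ^ (j + 2))]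
      _ = 16 * K * t * Fintype.card V / D := by
          rw [Finset.sum_const, Finset.card_range, nsmul_eq_mul]
          push_cast
          ring
  have hYX : Y j o ⊆ X := fun v hv => Finset.mem_biUnion.mpr
    ⟨j, Finset.mem_range.mpr hj, by rcases ho with rfl | rfl <;> simp [hv]⟩
  calc (A.ncard : ℝ) ≤ ⌊D * 2 ^ j⌋₊ := by
        exact_mod_cast hYsmall j o k A (fun a ha => ⟨(hA ha).1, fun h => (hA ha).2 (hYX h)⟩)
          hAconn
    _ ≤ D * 2 ^ j := Nat.floor_le (by positivity)

theorem one_le_log2' (x : ℝ) : 1 ≤ log2' x := by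
  unfold log2'
  split_ifs with h
  · rfl
  · rw [Real.le_logb_iff_rpow_le one_lt_two (by linarith), Real.rpow_one]
    linarith

theorem natLog_two_le_log2' (n : ℕ) : (Nat.log 2 n : ℝ) ≤ log2' n := by
  unfold log2'
  split_ifs with h
  · have : Nat.log 2 n ≤ 1 :=
      (Nat.log_mono_right (show n ≤ 2 by exact_mod_cast h)).trans_eq
        (Nat.log_eq_one_iff.mpr (by norm_num))
    exact_mod_cast this
  · exact_mod_cast Real.natLog_le_logb n 2

theorem baker_local_sparsification_general
    (t n : ℕ) (D : ℝ) (hD1 : 1 ≤ D) (hDn : D ≤ n)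
    (V : Type) [Fintype V] (G : SimpleGraph V)
    (hcard : Fintype.card V = n) (hBaker : IsTBaker G t) :
    ∃ X : Finset V,
      (X.card : ℝ) ≤ 18 * t * n * log2' n / D ∧
      LocalDensityLE (deleteVerts G X) D := by
  obtain ⟨L, hL⟩ := hBaker
  have hD : 0 < D := by linarith
  by_cases hDsmall : D ≤ 18 * t * log2' n
  · refine ⟨Finset.univ, ?_, fun v => absurd (Finset.mem_univ _) v.2⟩
    rw [Finset.card_univ, hcard, le_div_iff₀ hD]
    calc (n : ℝ) * D ≤ n * (18 * t * log2' n) := by gcongr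
      _ = 18 * t * n * log2' n := by ring
  obtain ⟨v⟩ : Nonempty V :=
    Fintype.card_pos_iff.mp (by rw [hcard]; exact_mod_cast hD1.trans hDn)
  have ht : (1 : ℝ) ≤ t := by exact_mod_cast hL.one_le v
  have hD2 : 2 ≤ D := by nlinarith [one_le_log2' n]
  obtain ⟨X, hXcard, hXsmall⟩ := hL.exists_multiscale_sparsifier hD (Nat.log 2 n)
  refine ⟨X, hXcard.trans ?_,
    localDensityLE_deleteVerts (fun _ _ h => hL.1.abs_layer_sub_le_one h) hD ?_ hXsmall⟩
  · rw [hcard]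
    gcongr ?_ / D
    have htn : (0 : ℝ) ≤ t * n := by positivity
    nlinarith [mul_le_mul_of_nonneg_right (natLog_two_le_log2' n) htn,
      mul_nonneg (zero_le_one.trans (one_le_log2' n)) htn]
  · rw [hcard]
    have : n < 2 ^ (Nat.log 2 n + 1) := Nat.lt_pow_succ_log_self one_lt_two n
    calc (n : ℝ) ≤ 2 * 2 ^ Nat.log 2 n := by exact_mod_cast (this.trans_eq (by ring)).le
      _ ≤ D * 2 ^ Nat.log 2 n := by gcongr

/-- **Lemma.** For every real `D` and integer `n` with `1 ≤ D ≤ n`, every `n`-vertex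
`t`-Baker graph `G` contains a set `X` of at most `(18·t·n·log n)/D` vertices such that
`G − X` has local density at most `D`. -/
theorem baker_local_sparsification
    (t n : ℕ) (D : ℝ) (hD1 : 1 ≤ D) (hDn : D ≤ n)
    (V : Type) [Fintype V] [DecidableEq V] (G : SimpleGraph V)
    (hcard : Fintype.card V = n) (hBaker : IsTBaker G t) :
    ∃ X : Finset V,
      (X.card : ℝ) ≤ 18 * t * n * log2' n / D ∧
      LocalDensityLE (deleteVerts G X) D :=
  baker_local_sparsification_general t n D hD1 hDn V G hcard hBaker
end
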